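/- Let A, P ∈ ℝ^{N×N} with P symmetric positive definite. If P − A P Aᵀ is positive definite, then every eigenvalue λ ∈ ℂ of A (viewed as a complex matrix) satisfies |λ| < 1; in particular, for every z ∈ ℂ with |z| = 1 the matrix zI − A is invertible. -/

import Mathlib

/-!
If `μ` is an eigenvalue of `A`, then `conj μ` is one of `Aᴴ`, say `Aᴴ v = conj μ • v` with `v ≠ 0`.
The quadratic form of `P - A P Aᴴ` at `v` is then `(1 - |μ|²) v*Pv`, and both forms are positive,
so `|μ| < 1`. A real positive definite matrix stays positive definite over `ℂ`, since its complex
quadratic form is the sum of the real forms at the real and imaginary parts of the vector.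
-/

open Matrix
open scoped ComplexOrder

namespace Matrix

variable {n 𝕜 : Type*} [RCLike 𝕜]

lemma transpose_map_ofReal {m : Type*} (A : Matrix m n ℝ) :
    Aᵀ.map (RCLike.ofReal : ℝ → 𝕜) = (A.map RCLike.ofReal)ᴴ := by
  rw [← conjTranspose_eq_transpose_of_trivial]
  exact conjTranspose_map _ fun x => by simp

variable [Fintype n]

lemma star_dotProduct_mul_mul_conjTranspose_mulVec {α : Type*} [CommSemiring α] [StarRing α]
    (A P : Matrix n n α) (v : n → α) :
    star v ⬝ᵥ (A * P * Aᴴ) *ᵥ v = star (Aᴴ *ᵥ v) ⬝ᵥ P *ᵥ (Aᴴ *ᵥ v) := by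
  rw [star_mulVec, conjTranspose_conjTranspose, ← mulVec_mulVec, ← mulVec_mulVec,
    dotProduct_mulVec]

lemma exists_mulVec_eq_smul_of_mem_spectrum [DecidableEq n] {A : Matrix n n 𝕜} {μ : 𝕜}
    (hμ : μ ∈ spectrum 𝕜 A) : ∃ v ≠ 0, A *ᵥ v = μ • v := by
  rw [← spectrum_toLin', ← Module.End.hasEigenvalue_iff_mem_spectrum] at hμ
  obtain ⟨v, hv⟩ := hμ.exists_hasEigenvector
  exact ⟨v, hv.2, by simpa using hv.apply_eq_smul⟩

theorem norm_lt_one_of_mem_spectrum_of_posDef_sub [DecidableEq n] {A P : Matrix n n 𝕜}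
    (hP : P.PosDef) (hQ : (P - A * P * Aᴴ).PosDef) {μ : 𝕜} (hμ : μ ∈ spectrum 𝕜 A) :
    ‖μ‖ < 1 := by
  have hμ' : star μ ∈ spectrum 𝕜 Aᴴ := by
    rwa [← star_eq_conjTranspose, spectrum.map_star, Set.star_mem_star]
  obtain ⟨v, hv0, hv⟩ := exists_mulVec_eq_smul_of_mem_spectrum hμ'
  have hform : star v ⬝ᵥ (P - A * P * Aᴴ) *ᵥ v = (1 - ‖μ‖ ^ 2 : ℝ) • (star v ⬝ᵥ P *ᵥ v) := by
    rw [sub_mulVec, dotProduct_sub, star_dotProduct_mul_mul_conjTranspose_mulVec, hv, star_smul,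
      star_star, mulVec_smul, smul_dotProduct, dotProduct_smul, smul_smul, sub_smul, one_smul,
      RCLike.star_def, RCLike.mul_conj, RCLike.real_smul_eq_coe_mul, smul_eq_mul]
    push_cast
    ring
  have hpos := hQ.re_dotProduct_pos hv0
  rw [hform, RCLike.smul_re] at hpos
  have hnorm_sq : ‖μ‖ ^ 2 < 1 := by nlinarith [hP.re_dotProduct_pos hv0]
  exact (sq_lt_one_iff₀ (norm_nonneg μ)).1 hnorm_sq

lemma re_star_dotProduct_map_ofReal_mulVec (M : Matrix n n ℝ) (x : n → 𝕜) :
    RCLike.re (star x ⬝ᵥ M.map RCLike.ofReal *ᵥ x) =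
      (RCLike.re ∘ x) ⬝ᵥ M *ᵥ (RCLike.re ∘ x) + (RCLike.im ∘ x) ⬝ᵥ M *ᵥ (RCLike.im ∘ x) := by
  simp only [dotProduct, mulVec, Pi.star_apply, map_apply, map_sum, Function.comp_apply,
    RCLike.mul_re, RCLike.mul_im, RCLike.ofReal_re, RCLike.ofReal_im, RCLike.star_def,
    RCLike.conj_re, RCLike.conj_im, Finset.mul_sum, ← Finset.sum_add_distrib]
  refine Finset.sum_congr rfl fun i _ => Finset.sum_congr rfl fun j _ => ?_
  ring

lemma PosDef.map_ofReal {M : Matrix n n ℝ} (hM : M.PosDef) :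
    (M.map (RCLike.ofReal : ℝ → 𝕜)).PosDef := by
  have hherm : (M.map (RCLike.ofReal : ℝ → 𝕜)).IsHermitian := by
    simpa using hM.isHermitian.map (RCLike.ofReal : ℝ → 𝕜) fun x => by simp
  refine .of_dotProduct_mulVec_pos hherm fun x hx => RCLike.pos_iff.2
    ⟨?_, hherm.im_star_dotProduct_mulVec_self x⟩
  rw [re_star_dotProduct_map_ofReal_mulVec]
  have hsplit : RCLike.re ∘ x ≠ 0 ∨ RCLike.im ∘ x ≠ 0 := by
    by_contra! h
    exact hx (funext fun i =>
      RCLike.ext (by simpa using congrFun h.1 i) (by simpa using congrFun h.2 i))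
  have hre := hM.posSemidef.dotProduct_mulVec_nonneg (RCLike.re ∘ x)
  have him := hM.posSemidef.dotProduct_mulVec_nonneg (RCLike.im ∘ x)
  rw [star_trivial] at hre him
  rcases hsplit with h | h
  · exact add_pos_of_pos_of_nonneg (by simpa using hM.dotProduct_mulVec_pos h) him
  · exact add_pos_of_nonneg_of_pos hre (by simpa using hM.dotProduct_mulVec_pos h)

theorem norm_lt_one_of_mem_spectrum_map_ofReal_of_posDef_sub [DecidableEq n]
    {A P : Matrix n n ℝ} (hP : P.PosDef) (hQ : (P - A * P * Aᵀ).PosDef) {μ : 𝕜}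
    (hμ : μ ∈ spectrum 𝕜 (A.map (RCLike.ofReal : ℝ → 𝕜))) : ‖μ‖ < 1 := by
  have hQ' := hQ.map_ofReal (𝕜 := 𝕜)
  rw [Matrix.map_sub _ fun _ _ => RCLike.ofReal_sub _ _, Matrix.map_mul, Matrix.map_mul,
    transpose_map_ofReal] at hQ'
  exact norm_lt_one_of_mem_spectrum_of_posDef_sub hP.map_ofReal hQ' hμ

end Matrix

/-- Discrete-time Lyapunov (Stein) theorem: if `P` is symmetric positive definite and
`P − A P Aᵀ` is positive definite, then every eigenvalue of `A` (viewed as a complex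
matrix) has modulus strictly less than 1; in particular `zI − A` is invertible for
every `z` on the unit circle. -/
theorem schur_stable_of_stein {N : ℕ}
    (A P : Matrix (Fin N) (Fin N) ℝ) (hP : P.PosDef)
    (h : (P - A * P * Aᵀ).PosDef) :
    (∀ μ ∈ spectrum ℂ (A.map (Complex.ofReal ·)), ‖μ‖ < 1) ∧
    (∀ z : ℂ, ‖z‖ = 1 →
      IsUnit (z • (1 : Matrix (Fin N) (Fin N) ℂ) - A.map (Complex.ofReal ·))) := by
  have hspec : ∀ μ ∈ spectrum ℂ (A.map (Complex.ofReal ·)), ‖μ‖ < 1 := fun _ hμ =>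
    norm_lt_one_of_mem_spectrum_map_ofReal_of_posDef_sub hP h hμ
  refine ⟨hspec, fun z hz => ?_⟩
  rw [← Algebra.algebraMap_eq_smul_one, ← spectrum.notMem_iff]
  exact fun hz_mem => (hspec z hz_mem).ne hz
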